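/- Let $k$ be a commutative ring, $A$ a commutative $k$-algebra, and $M$ an $A$-module. Suppose $d_0 : A \to M$ is a $k$-linear derivation and $d_1 : M \to \Lambda^2_A M$ is a $k$-linear map satisfying the Leibniz rule $d_1(a \cdot m) = a \cdot d_1(m) + d_0(a) \wedge m$ for all $a \in A$, $m \in M$. Then there is a unique family of $k$-linear maps $d_i : \Lambda^i_A M \to \Lambda^{i+1}_A M$ extending $d_0$ and $d_1$ such that $d_{i+j}(\omega \wedge \eta) = d_i(\omega) \wedge \eta + (-1)^i \omega \wedge d_j(\eta)$ for $\omega \in \Lambda^i_A M$, $\eta \in \Lambda^j_A M$. -/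

import Mathlib

/-!
Since `involute` is `(-1)^i` on `Λ^i_A M`, the graded Leibniz rule reads
`δ (x * y) = δ x * y + involute x * δ y`, and an additive `δ` satisfies it iff `x ↦ (x, δ x)` is a
ring map into the square-zero extension of `Λ_A M` by itself with the left action twisted by
the grade involution. Via `a ↦ (a, d₀ a)` that extension is an `A`-algebra (this uses the Leibniz
rule of `d₀`), and `m ↦ (m, d₁ m)` is `A`-linear (the Leibniz rule of `d₁`) and squares to zero
(`d₁ m` is even, so it commutes with `m`); the universal property of the exterior algebra then
produces `δ`. Uniqueness holds because `Λ_A M` is generated by `A` and `M`.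
-/

open ExteriorAlgebra

/-- The submodule of degree-`i` elements (the `i`-th exterior power) inside the
exterior algebra of the `A`-module `M`. -/
noncomputable def degreePiece (A M : Type*) [CommRing A] [AddCommGroup M] [Module A M]
    (i : ℕ) : Submodule A (ExteriorAlgebra A M) :=
  (LinearMap.range (ExteriorAlgebra.ι A : M →ₗ[A] ExteriorAlgebra A M)) ^ i

open CliffordAlgebra (involute involute_ι)

namespace ExteriorAlgebra

variable {A M : Type*} [CommRing A] [AddCommGroup M] [Module A M]

theorem ι_mul_eq_involute_mul (v : M) (x : ExteriorAlgebra A M) :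
    ι A v * x = involute x * ι A v := by
  induction x using ExteriorAlgebra.induction with
  | algebraMap r => rw [AlgHom.commutes]; exact (Algebra.commutes r _).symm
  | ι m => rw [involute_ι, neg_mul, eq_neg_iff_add_eq_zero]; exact ι_add_mul_swap v m
  | mul x y hx hy => rw [map_mul, ← mul_assoc, hx, mul_assoc, hy, ← mul_assoc]
  | add x y hx hy => rw [map_add, mul_add, add_mul, hx, hy]

theorem involute_eq_of_mem_exteriorPower {i : ℕ} {x : ExteriorAlgebra A M}
    (hx : x ∈ ⋀[A]^i M) :
    involute x = ((-1 : ℤ) ^ i) • x := by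
  induction hx using Submodule.pow_induction_on_left' with
  | algebraMap r => simp
  | add x y i hx hy ihx ihy => rw [map_add, ihx, ihy, smul_add]
  | mem_mul m hm i x hx ih =>
    obtain ⟨v, rfl⟩ := hm
    rw [map_mul, involute_ι, ih, pow_succ', mul_smul, neg_one_zsmul, neg_mul, mul_smul_comm]

end ExteriorAlgebra

section SquareZero

variable (A M : Type*) [CommRing A] [AddCommGroup M] [Module A M]

/-- `ExteriorAlgebra A M` as a bimodule over itself, the left action being twisted by the grade
involution. -/
def TwistedSelf : Type _ := ExteriorAlgebra A M

instance : AddCommGroup (TwistedSelf A M) :=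
  inferInstanceAs (AddCommGroup (ExteriorAlgebra A M))

instance : Module (ExteriorAlgebra A M) (TwistedSelf A M) :=
  Module.compHom (ExteriorAlgebra A M) (involute : ExteriorAlgebra A M →ₐ[A] _).toRingHom

instance : Module (ExteriorAlgebra A M)ᵐᵒᵖ (TwistedSelf A M) :=
  inferInstanceAs (Module (ExteriorAlgebra A M)ᵐᵒᵖ (ExteriorAlgebra A M))

instance : SMulCommClass (ExteriorAlgebra A M) (ExteriorAlgebra A M)ᵐᵒᵖ (TwistedSelf A M) :=
  ⟨fun x y z => (mul_assoc (involute x) (z : ExteriorAlgebra A M) y.unop).symm⟩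

variable {A M}

local notation "Λ" => ExteriorAlgebra A M

def twistedPair (x y : Λ) : TrivSqZeroExt Λ (TwistedSelf A M) := (x, y)

def twistedSnd (z : TrivSqZeroExt Λ (TwistedSelf A M)) : Λ := z.snd

theorem twistedPair_fst_twistedSnd (z : TrivSqZeroExt Λ (TwistedSelf A M)) :
    twistedPair z.fst (twistedSnd z) = z :=
  rfl

theorem fst_twistedPair (x y : Λ) : (twistedPair x y).fst = x := rfl

theorem twistedSnd_twistedPair (x y : Λ) : twistedSnd (twistedPair x y) = y := rfl

theorem twistedSnd_add (z w : TrivSqZeroExt Λ (TwistedSelf A M)) :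
    twistedSnd (z + w) = twistedSnd z + twistedSnd w := rfl

theorem twistedSnd_mul (z w : TrivSqZeroExt Λ (TwistedSelf A M)) :
    twistedSnd (z * w) = involute z.fst * twistedSnd w + twistedSnd z * w.fst := rfl

theorem twistedPair_inj {x y x' y' : Λ} :
    twistedPair x y = twistedPair x' y' ↔ x = x' ∧ y = y' :=
  Prod.ext_iff

theorem twistedPair_add (x y x' y' : Λ) :
    twistedPair x y + twistedPair x' y' = twistedPair (x + x') (y + y') := rfl

theorem twistedPair_mul (x y x' y' : Λ) :
    twistedPair x y * twistedPair x' y' = twistedPair (x * x') (involute x * y' + y * x') := rfl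

theorem twistedPair_zero : twistedPair (0 : Λ) 0 = 0 := rfl

theorem twistedPair_one : twistedPair (1 : Λ) 0 = 1 := rfl

end SquareZero

namespace ExteriorAlgebra

variable {A M : Type*} [CommRing A] [AddCommGroup M] [Module A M]

theorem algebraMap_mem_exteriorPower_zero (a : A) :
    algebraMap A (ExteriorAlgebra A M) a ∈ ⋀[A]^0 M :=
  SetLike.algebraMap_mem_graded _ a

theorem ι_mem_exteriorPower_one (m : M) : ι A m ∈ ⋀[A]^1 M := by
  simpa only [exteriorPower, pow_one] using LinearMap.mem_range_self _ m

theorem ι_mul_comm_of_mem_exteriorPower_two (m : M) {ω : ExteriorAlgebra A M}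
    (hω : ω ∈ ⋀[A]^2 M) : ι A m * ω = ω * ι A m := by
  rw [ι_mul_eq_involute_mul, involute_eq_of_mem_exteriorPower hω, neg_one_sq, one_zsmul]

theorem ext_of_gradedLeibniz {F : Type*} [FunLike F (ExteriorAlgebra A M) (ExteriorAlgebra A M)]
    [AddMonoidHomClass F (ExteriorAlgebra A M) (ExteriorAlgebra A M)] {δ δ' : F}
    (hδ : ∀ (i : ℕ) (x y : ExteriorAlgebra A M), x ∈ ⋀[A]^i M →
      δ (x * y) = δ x * y + ((-1 : ℤ) ^ i) • (x * δ y))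
    (hδ' : ∀ (i : ℕ) (x y : ExteriorAlgebra A M), x ∈ ⋀[A]^i M →
      δ' (x * y) = δ' x * y + ((-1 : ℤ) ^ i) • (x * δ' y))
    (halg : ∀ a : A, δ (algebraMap A _ a) = δ' (algebraMap A _ a))
    (hι : ∀ m : M, δ (ι A m) = δ' (ι A m)) : δ = δ' := by
  have hmul : ∀ x y : ExteriorAlgebra A M, δ y = δ' y → δ (x * y) = δ' (x * y) := by
    intro x
    induction x using ExteriorAlgebra.induction with
    | algebraMap a =>
      intro y hy
      have ha := algebraMap_mem_exteriorPower_zero (A := A) (M := M) a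
      rw [hδ 0 _ y ha, hδ' 0 _ y ha, halg, hy]
    | ι m =>
      intro y hy
      have hm := ι_mem_exteriorPower_one (A := A) m
      rw [hδ 1 _ y hm, hδ' 1 _ y hm, hι, hy]
    | mul x₁ x₂ ih₁ ih₂ => intro y hy; rw [mul_assoc]; exact ih₁ _ (ih₂ _ hy)
    | add x₁ x₂ ih₁ ih₂ => intro y hy; rw [add_mul, map_add, map_add, ih₁ _ hy, ih₂ _ hy]
  refine DFunLike.ext _ _ fun x => ?_
  rw [← mul_one x, ← map_one (algebraMap A (ExteriorAlgebra A M))]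
  exact hmul x _ (halg 1)

end ExteriorAlgebra

section Extension

variable {k A M : Type*} [CommRing k] [CommRing A] [Algebra k A]
  [AddCommGroup M] [Module k M] [Module A M]

local notation "Λ" => ExteriorAlgebra A M
local notation "𝔼" => TrivSqZeroExt (ExteriorAlgebra A M) (TwistedSelf A M)

def Derivation.toTwistedSqZero (d0 : Derivation k A M) : A →+* 𝔼 where
  toFun a := twistedPair (algebraMap A Λ a) (ι A (d0 a))
  map_one' := by rw [map_one, d0.map_one_eq_zero, map_zero, twistedPair_one]
  map_zero' := by rw [map_zero, map_zero, map_zero, twistedPair_zero]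
  map_add' a b := by rw [twistedPair_add, map_add, map_add, map_add]
  map_mul' a b := by
    rw [twistedPair_mul, twistedPair_inj, AlgHom.commutes, d0.leibniz, map_add, _root_.map_smul,
      _root_.map_smul, Algebra.smul_def, Algebra.smul_def, Algebra.commutes b, add_comm]
    exact ⟨map_mul _ a b, rfl⟩

theorem Derivation.toTwistedSqZero_apply (d0 : Derivation k A M) (a : A) :
    d0.toTwistedSqZero a = twistedPair (algebraMap A Λ a) (ι A (d0 a)) := rfl

theorem Derivation.toTwistedSqZero_commute (d0 : Derivation k A M) (a : A) (z : 𝔼) :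
    d0.toTwistedSqZero a * z = z * d0.toTwistedSqZero a := by
  rw [← twistedPair_fst_twistedSnd z, toTwistedSqZero_apply, twistedPair_mul, twistedPair_mul,
    twistedPair_inj]
  refine ⟨Algebra.commutes a _, ?_⟩
  rw [AlgHom.commutes, ← Algebra.commutes, ExteriorAlgebra.ι_mul_eq_involute_mul, add_comm]

abbrev Derivation.twistedSqZeroAlgebra (d0 : Derivation k A M) : Algebra A 𝔼 :=
  d0.toTwistedSqZero.toAlgebra' d0.toTwistedSqZero_commute

variable [IsScalarTower k A M] (d0 : Derivation k A M) (d1 : M →ₗ[k] ExteriorAlgebra A M)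
  (hd1 : ∀ m, d1 m ∈ ⋀[A]^2 M)
  (hLeib : ∀ (a : A) (m : M),
    d1 (a • m) = algebraMap A (ExteriorAlgebra A M) a * d1 m + ι A (d0 a) * ι A m)

/-- `x ↦ (x, δ x)` for the extension `δ` of `d₀` and `d₁`. -/
def liftTwistedSqZero : Λ →+* 𝔼 :=
  letI := d0.twistedSqZeroAlgebra
  let f : M →ₗ[A] 𝔼 :=
    { toFun m := twistedPair (ι A m) (d1 m)
      map_add' m n := by rw [twistedPair_add, map_add, map_add]
      map_smul' a m := by
        rw [RingHom.id_apply, Algebra.smul_def, RingHom.algebraMap_toAlgebra',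
          d0.toTwistedSqZero_apply, twistedPair_mul, twistedPair_inj, hLeib, _root_.map_smul,
          Algebra.smul_def, AlgHom.commutes, add_comm]
        exact ⟨rfl, rfl⟩ }
  have hf (m : M) : f m * f m = 0 := by
    change twistedPair _ _ * twistedPair _ _ = 0
    rw [← twistedPair_zero, twistedPair_mul, twistedPair_inj, involute_ι, neg_mul,
      ι_mul_comm_of_mem_exteriorPower_two m (hd1 m), neg_add_cancel]
    exact ⟨ι_sq_zero m, rfl⟩
  (ExteriorAlgebra.lift A ⟨f, hf⟩).toRingHom

theorem liftTwistedSqZero_algebraMap (a : A) :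
    liftTwistedSqZero d0 d1 hd1 hLeib (algebraMap A Λ a) = d0.toTwistedSqZero a :=
  letI := d0.twistedSqZeroAlgebra
  AlgHom.commutes _ a

theorem liftTwistedSqZero_ι (m : M) :
    liftTwistedSqZero d0 d1 hd1 hLeib (ι A m) = twistedPair (ι A m) (d1 m) :=
  letI := d0.twistedSqZeroAlgebra
  ExteriorAlgebra.lift_ι_apply _ _ _ m

theorem fst_liftTwistedSqZero (x : Λ) : (liftTwistedSqZero d0 d1 hd1 hLeib x).fst = x := by
  induction x using ExteriorAlgebra.induction with
  | algebraMap a => rw [liftTwistedSqZero_algebraMap, d0.toTwistedSqZero_apply, fst_twistedPair]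
  | ι m => rw [liftTwistedSqZero_ι, fst_twistedPair]
  | mul x y hx hy => rw [map_mul, TrivSqZeroExt.fst_mul, hx, hy]
  | add x y hx hy => rw [map_add, TrivSqZeroExt.fst_add, hx, hy]

theorem twistedSnd_liftTwistedSqZero_mul (x y : Λ) :
    twistedSnd (liftTwistedSqZero d0 d1 hd1 hLeib (x * y)) =
      involute x * twistedSnd (liftTwistedSqZero d0 d1 hd1 hLeib y)
        + twistedSnd (liftTwistedSqZero d0 d1 hd1 hLeib x) * y := by
  rw [map_mul, twistedSnd_mul, fst_liftTwistedSqZero, fst_liftTwistedSqZero]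

def extendDerivation : ExteriorAlgebra A M →ₗ[k] ExteriorAlgebra A M where
  toFun x := twistedSnd (liftTwistedSqZero d0 d1 hd1 hLeib x)
  map_add' x y := by rw [map_add, twistedSnd_add]
  map_smul' c x := by
    rw [RingHom.id_apply, ← algebraMap_smul A c x, Algebra.smul_def,
      twistedSnd_liftTwistedSqZero_mul, liftTwistedSqZero_algebraMap, d0.toTwistedSqZero_apply,
      twistedSnd_twistedPair, d0.map_algebraMap, map_zero, zero_mul, add_zero, AlgHom.commutes,
      ← Algebra.smul_def, algebraMap_smul]

theorem extendDerivation_algebraMap (a : A) :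
    extendDerivation d0 d1 hd1 hLeib (algebraMap A Λ a) = ι A (d0 a) := by
  rw [extendDerivation, LinearMap.coe_mk, AddHom.coe_mk, liftTwistedSqZero_algebraMap,
    d0.toTwistedSqZero_apply, twistedSnd_twistedPair]

theorem extendDerivation_ι (m : M) : extendDerivation d0 d1 hd1 hLeib (ι A m) = d1 m := by
  rw [extendDerivation, LinearMap.coe_mk, AddHom.coe_mk, liftTwistedSqZero_ι,
    twistedSnd_twistedPair]

theorem extendDerivation_mul (x y : Λ) :
    extendDerivation d0 d1 hd1 hLeib (x * y) =
      extendDerivation d0 d1 hd1 hLeib x * y + involute x * extendDerivation d0 d1 hd1 hLeib y :=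
  (twistedSnd_liftTwistedSqZero_mul d0 d1 hd1 hLeib x y).trans (add_comm _ _)

theorem extendDerivation_mul_of_mem {i : ℕ} {x : Λ} (hx : x ∈ ⋀[A]^i M) (y : Λ) :
    extendDerivation d0 d1 hd1 hLeib (x * y) =
      extendDerivation d0 d1 hd1 hLeib x * y
        + ((-1 : ℤ) ^ i) • (x * extendDerivation d0 d1 hd1 hLeib y) := by
  rw [extendDerivation_mul, involute_eq_of_mem_exteriorPower hx, smul_mul_assoc]

theorem extendDerivation_mem_exteriorPower {i : ℕ} {x : Λ} (hx : x ∈ ⋀[A]^i M) :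
    extendDerivation d0 d1 hd1 hLeib x ∈ ⋀[A]^(i + 1) M := by
  induction hx using Submodule.pow_induction_on_left' with
  | algebraMap a =>
    rw [extendDerivation_algebraMap]
    exact ι_mem_exteriorPower_one _
  | add x y i _ _ hx hy => rw [map_add]; exact add_mem hx hy
  | mem_mul m hm i x hx ih =>
    obtain ⟨v, rfl⟩ := hm
    rw [extendDerivation_mul_of_mem d0 d1 hd1 hLeib (ι_mem_exteriorPower_one v),
      extendDerivation_ι]
    have h1 := SetLike.mul_mem_graded (hd1 v) hx
    have h2 := SetLike.mul_mem_graded (ι_mem_exteriorPower_one (A := A) v) ih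
    rw [show 1 + (i + 1) = 2 + i by omega] at h2
    rw [show i.succ + 1 = 2 + i by omega]
    exact add_mem h1 (zsmul_mem h2 _)

end Extension

/-- a `k`-linear derivation `d₀ : A → M` together with a `k`-linear map
`d₁ : M → Λ²_A M` satisfying the Leibniz rule extends uniquely to a family of `k`-linear
maps `dᵢ : Λ^i_A M → Λ^{i+1}_A M` (packaged as a single `k`-linear degree-one map on the
exterior algebra) satisfying the graded Leibniz rule. -/
theorem stmt_0 {k A M : Type} [CommRing k] [CommRing A] [Algebra k A]
    [AddCommGroup M] [Module k M] [Module A M] [IsScalarTower k A M]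
    (d0 : Derivation k A M)
    (d1 : M →ₗ[k] ExteriorAlgebra A M)
    (hd1range : ∀ m : M, d1 m ∈ degreePiece A M 2)
    (hLeib1 : ∀ (a : A) (m : M),
      d1 (a • m) = algebraMap A (ExteriorAlgebra A M) a * d1 m
        + ExteriorAlgebra.ι A (d0 a) * ExteriorAlgebra.ι A m) :
    ∃! δ : ExteriorAlgebra A M →ₗ[k] ExteriorAlgebra A M,
      (∀ (i : ℕ) (x : ExteriorAlgebra A M),
          x ∈ degreePiece A M i → δ x ∈ degreePiece A M (i + 1))
      ∧ (∀ a : A, δ (algebraMap A (ExteriorAlgebra A M) a) = ExteriorAlgebra.ι A (d0 a))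
      ∧ (∀ m : M, δ (ExteriorAlgebra.ι A m) = d1 m)
      ∧ (∀ (i : ℕ) (x y : ExteriorAlgebra A M), x ∈ degreePiece A M i →
          δ (x * y) = δ x * y + ((-1 : ℤ) ^ i) • (x * δ y)) := by
  let δ := extendDerivation d0 d1 hd1range hLeib1
  have hδ_mul (i : ℕ) (x y : ExteriorAlgebra A M) (hx : x ∈ degreePiece A M i) :
      δ (x * y) = δ x * y + ((-1 : ℤ) ^ i) • (x * δ y) :=
    extendDerivation_mul_of_mem d0 d1 hd1range hLeib1 hx y
  refine ⟨δ, ⟨fun i x hx => extendDerivation_mem_exteriorPower d0 d1 hd1range hLeib1 hx,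
    extendDerivation_algebraMap d0 d1 hd1range hLeib1, extendDerivation_ι d0 d1 hd1range hLeib1,
    hδ_mul⟩, ?_⟩
  rintro δ' ⟨-, halg, hι, hδ'_mul⟩
  refine ext_of_gradedLeibniz hδ'_mul hδ_mul (fun a => ?_) (fun m => ?_)
  · exact (halg a).trans (extendDerivation_algebraMap d0 d1 hd1range hLeib1 a).symm
  · exact (hι m).trans (extendDerivation_ι d0 d1 hd1range hLeib1 m).symm
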